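/- Let b > 1, let a ∈ S_b, and let c, d ∈ (−1,1) with d ≠ 0. Then it is not the case that both ψ(a,b,c,d) = 0 and (∂ψ/∂a)(a,b,c,d) = 0; here ∂ψ/∂a denotes the derivative of the function a ↦ ψ(a,b,c,d). -/

import Mathlib

/-!
Write `ψ(·, b, c, d) = A_b · u + B_b · v` with polynomials `A_b, B_b` in `a` and
`u = c² + d² − 2c²d²`, `v = cd(c² − d²)`. At a double root, eliminating `v` between
`ψ = 0` and `∂ψ/∂a = 0` leaves `W(A_b, B_b)(a) · u = 0`, where `W` is the Wronskian.
Here `u > 0`, and `W(A_b, B_b) = −(b⁴ − 1) · r(a, b)` with `r` positive on `S_b`.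
-/

noncomputable def psi (a b c d : ℝ) : ℝ :=
  (a^2 - 1) * (b^2 + 1) * (a^2*b^2 + a^2 + a*b^2 - a + b^2 + 1) * (c^2 + d^2 - 2*c^2*d^2)
    + a * (b^2 - 1) * (a^2*b^2 + a^2 + 2*a*b^2 - 4*a*b - 2*a + b^2 + 1) * c * d * (c^2 - d^2)

noncomputable def Sb (b : ℝ) : Set ℝ :=
  if b < 1 + Real.sqrt 2 then
    Set.Ioo ((1 + 2*b - b^2) / (b^2 + 1)) ((b^2 + 1) / (1 + 2*b - b^2))
  else Set.Ioi 0

open Polynomial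

theorem eval_wronskian_mul_eq_zero {R : Type*} [CommRing R] {p q : R[X]} {x u v : R}
    (h : p.eval x * u + q.eval x * v = 0)
    (h' : (derivative p).eval x * u + (derivative q).eval x * v = 0) :
    (wronskian p q).eval x * u = 0 := by
  simp only [wronskian, eval_sub, eval_mul]
  linear_combination (derivative q).eval x * h - q.eval x * h'

noncomputable def psiA (b : ℝ) : ℝ[X] :=
  C (b^2 + 1) * (X^2 - 1) * (C (b^2 + 1) * X^2 + C (b^2 - 1) * X + C (b^2 + 1))

noncomputable def psiB (b : ℝ) : ℝ[X] :=
  C (b^2 - 1) * X * (C (b^2 + 1) * X^2 + C (2 * (b^2 - 2*b - 1)) * X + C (b^2 + 1))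

theorem psi_eq_eval (a b c d : ℝ) :
    psi a b c d = (psiA b).eval a * (c^2 + d^2 - 2*c^2*d^2)
      + (psiB b).eval a * (c*d*(c^2 - d^2)) := by
  simp only [psi, psiA, psiB, eval_mul, eval_add, eval_sub, eval_C, eval_X, eval_pow, eval_one]
  ring

theorem deriv_psi (a b c d : ℝ) :
    deriv (fun a' => psi a' b c d) a = (derivative (psiA b)).eval a * (c^2 + d^2 - 2*c^2*d^2)
      + (derivative (psiB b)).eval a * (c*d*(c^2 - d^2)) := by
  simp_rw [psi_eq_eval]
  exact ((((psiA b).hasDerivAt a).mul_const _).add (((psiB b).hasDerivAt a).mul_const _)).deriv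

/-- The factor `r(a, b)` of the paper's resultant. -/
noncomputable def rFactor (a b : ℝ) : ℝ :=
  8*b*(b-1)*(3*b^2+1)*a^3 + (30*b^4-36*b^3+20*b^2-28*b-2)*(a^2*(a-1)^2)
      + 2*(b^2+1)*(5*b^2-4*b+1)*(a*(a-1)^4) + (b^2+1)^2*(a-1)^6

theorem eval_wronskian_psiA_psiB (a b : ℝ) :
    (wronskian (psiA b) (psiB b)).eval a = -((b^2 + 1) * (b^2 - 1) * rFactor a b) := by
  simp only [wronskian, psiA, psiB, rFactor, derivative_mul, derivative_C, derivative_X,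
    derivative_X_pow, derivative_add, derivative_sub, derivative_one, eval_mul, eval_add,
    eval_sub, eval_C, eval_X, eval_pow, eval_one, eval_zero]
  ring

theorem rFactor_pos_of_coeff_nonneg {a b : ℝ} (hb : 1 < b) (ha : 0 < a)
    (hβ : 0 ≤ 30*b^4 - 36*b^3 + 20*b^2 - 28*b - 2) : 0 < rFactor a b := by
  unfold rFactor
  have hb1 : 0 < b - 1 := by linarith
  have h₁ : 0 < 8*b*(b-1)*(3*b^2+1)*a^3 := by positivity
  have h₂ : 0 ≤ 5*b^2 - 4*b + 1 := by nlinarith [sq_nonneg (2*b - 1)]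
  have h₃ : 0 ≤ a*(a-1)^4 := by positivity
  positivity

theorem rFactor_pos_of_between {a b : ℝ} (hb : 1 < b) (hm : 0 < 1 + 2*b - b^2)
    (hp : 0 < (1 + b^2)*a - (1 + 2*b - b^2)) (hq : 0 < (1 + b^2) - (1 + 2*b - b^2)*a) :
    0 < rFactor a b := by
  have ha : 0 < a := by nlinarith
  set β := 30*b^4 - 36*b^3 + 20*b^2 - 28*b - 2 with hβ_def
  rcases le_or_gt 0 β with hβ | hβ
  · exact rFactor_pos_of_coeff_nonneg hb ha hβ
  set m := 1 + 2*b - b^2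
  set n := 1 + b^2
  have hb1 : 0 < b - 1 := by linarith
  have hK : 0 < 8*b*(3*b^2+1)*n*m + 4*b^2*(b-1)*β := by
    nlinarith [mul_pos hb1 hm, mul_pos (by linarith : (0:ℝ) < b) hb1, sq_nonneg (b^2-1)]
  -- `(n a − m)(n − m a) = (n − m)² a − m n (a − 1)²` with `n − m = 2b(b − 1)` trades the
  -- negative `β`-term for a multiple of `a³` plus a positive multiple of `(n a − m)(n − m a)`.
  have key : n * m * rFactor a b = (b-1) * (8*b*(3*b^2+1)*n*m + 4*b^2*(b-1)*β) * a^3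
      + (-β) * a^2 * ((n*a - m) * (n - m*a))
      + n * m * (2*(b^2+1)*(5*b^2-4*b+1)*(a*(a-1)^4) + (b^2+1)^2*(a-1)^6) := by
    simp only [rFactor, hβ_def, m, n]
    ring
  have h₂ : 0 ≤ 5*b^2 - 4*b + 1 := by nlinarith [sq_nonneg (2*b - 1)]
  have h₃ : 0 ≤ a*(a-1)^4 := by positivity
  have hnβ : 0 < -β := by linarith
  have hprod : 0 < n * m * rFactor a b := by
    rw [key]
    positivity
  exact pos_of_mul_pos_right hprod (by positivity)

theorem rFactor_pos {a b : ℝ} (hb : 1 < b) (ha : a ∈ Sb b) : 0 < rFactor a b := by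
  have hsqrt : Real.sqrt 2 ^ 2 = 2 := Real.sq_sqrt zero_le_two
  unfold Sb at ha
  split_ifs at ha with hb'
  · obtain ⟨hlo, hhi⟩ := ha
    have hm : 0 < 1 + 2*b - b^2 := by nlinarith [Real.sqrt_nonneg 2]
    rw [div_lt_iff₀ (by positivity)] at hlo
    rw [lt_div_iff₀ hm] at hhi
    exact rFactor_pos_of_between hb hm (by linarith) (by linarith)
  · have hw : 2*b + 1 ≤ b^2 := by nlinarith [Real.sqrt_nonneg 2]
    exact rFactor_pos_of_coeff_nonneg hb ha (by nlinarith)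

theorem sq_add_sq_sub_two_mul_sq_mul_sq_pos {c d : ℝ} (hc : c^2 < 1) (hd : d^2 < 1)
    (hd0 : d ≠ 0) : 0 < c^2 + d^2 - 2*c^2*d^2 := by
  have : 0 < d^2 * (1 - c^2) := mul_pos (by positivity) (by linarith)
  nlinarith [mul_nonneg (sq_nonneg c) (sub_nonneg.2 hd.le)]

theorem no_double_root (a b c d : ℝ) (hb : 1 < b) (ha : a ∈ Sb b)
    (hc : c ∈ Set.Ioo (-1 : ℝ) 1) (hd : d ∈ Set.Ioo (-1 : ℝ) 1) (hd0 : d ≠ 0) :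
    ¬ (psi a b c d = 0 ∧ deriv (fun a' => psi a' b c d) a = 0) := by
  rintro ⟨hψ, hψ'⟩
  rw [psi_eq_eval] at hψ
  rw [deriv_psi] at hψ'
  have hW := eval_wronskian_mul_eq_zero hψ hψ'
  rw [eval_wronskian_psiA_psiB] at hW
  have hc2 : c^2 < 1 := by rwa [sq_lt_one_iff_abs_lt_one, abs_lt]
  have hd2 : d^2 < 1 := by rwa [sq_lt_one_iff_abs_lt_one, abs_lt]
  have hu := sq_add_sq_sub_two_mul_sq_mul_sq_pos hc2 hd2 hd0
  have hb2 : 0 < b^2 - 1 := by nlinarith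
  have hr := rFactor_pos hb ha
  have : 0 < (b^2 + 1) * (b^2 - 1) * rFactor a b * (c^2 + d^2 - 2*c^2*d^2) := by positivity
  linarith
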